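/- arXiv:1011.2256 — 2 statements merged into one kernel-verified Lean document; each statement's English description precedes it below -/
import Mathlib

section
/- Let β > 0 and suppose B₁ > B₂ and A₂B₁ - 3A₁B₂ - 2A₁A₂ > 0 and A₁A₂ + 3A₁B₂ + B₁B₂ - A₂B₁ > 0, where A₁ = sinh³β·coshβ, B₁ = sinhβ·cosh²β·(1+coshβ+cosh²β), A₂ = sinh²β·cosh²β·(1+2coshβ), B₂ = cosh⁶β. Then the function g(t) = (A₁t³ + B₁t)/(A₂t² + B₂) is strictly increasing on [0,1]. -/
theorem stmt_12 (β : ℝ) (hβ : 0 < β)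
    (A₁ B₁ A₂ B₂ : ℝ)
    (hA₁ : A₁ = Real.sinh β ^ 3 * Real.cosh β)
    (hB₁ : B₁ = Real.sinh β * Real.cosh β ^ 2 * (1 + Real.cosh β + Real.cosh β ^ 2))
    (hA₂ : A₂ = Real.sinh β ^ 2 * Real.cosh β ^ 2 * (1 + 2 * Real.cosh β))
    (hB₂ : B₂ = Real.cosh β ^ 6)
    (hB : B₁ > B₂)
    (h1 : A₂ * B₁ - 3 * A₁ * B₂ - 2 * A₁ * A₂ > 0)
    (h2 : A₁ * A₂ + 3 * A₁ * B₂ + B₁ * B₂ - A₂ * B₁ > 0) :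
    StrictMonoOn (fun t : ℝ => (A₁ * t ^ 3 + B₁ * t) / (A₂ * t ^ 2 + B₂))
      (Set.Icc (0 : ℝ) 1) := by
  have hs0 : 0 < Real.sinh β := Real.sinh_pos_iff.mpr hβ
  have hc1 : 1 ≤ Real.cosh β := Real.one_le_cosh β
  have hc0 : 0 < Real.cosh β := lt_of_lt_of_le one_pos hc1
  have hA1 : 0 < A₁ := by rw [hA₁]; positivity
  have hB1 : 0 < B₁ := by rw [hB₁]; positivity
  have hA2 : 0 < A₂ := by rw [hA₂]; positivity
  have hB2 : 0 < B₂ := by rw [hB₂]; positivity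
  intro s hs t ht hst
  simp only [Set.mem_Icc] at hs ht
  have hds : 0 < A₂ * s ^ 2 + B₂ := by positivity
  have hdt : 0 < A₂ * t ^ 2 + B₂ := by positivity
  rw [div_lt_div_iff₀ hds hdt]
  have hts : 0 < t - s := sub_pos.mpr hst
  have hst1 : t * s ≤ 1 := by nlinarith [hs.1, ht.2, hs.2]
  nlinarith [mul_pos hts h2, mul_pos hA1 hA2,
    mul_nonneg (mul_nonneg hts.le (sub_nonneg.mpr hst1)) h1.le,
    mul_nonneg (mul_nonneg (mul_pos hA1 hA2).le hts.le) (sq_nonneg (1 - t*s)),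
    mul_nonneg (mul_nonneg (mul_pos hA1 hB2).le hts.le) (sq_nonneg (t - s)),
    mul_nonneg hs.1 hts.le]
end

section
/- Let A₁, B₁, A₂, B₂ > 0 and consider the system B₂x³ + A₂xy² = x, B₁x²y + A₁y³ = y on the domain Δ = {(x,y) ∈ ℝ²₊ : x > y}. If B₁ ≤ B₂ and A₁ < A₂, then the unique solution in Δ is (x,y) = (1/√B₂, 0). If B₁ > B₂ and A₁ < A₂, then the solutions in Δ are exactly (1/√B₂, 0) and (√(DE), √E), where D = (A₂-A₁)/(B₁-B₂) and E = 1/(A₂ + D·B₂), provided D > 1. -/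
/-!
For `x ≠ 0` the first equation says that `(x, y)` lies on the ellipse `B₂x² + A₂y² = 1`, and the
second that `y = 0` or `(x, y)` lies on the ellipse `B₁x² + A₁y² = 1`. On the axis this leaves
`x = 1/√B₂`. Off the axis `(x², y²)` solves a 2×2 linear system: when `B₁ ≤ B₂` and `A₁ < A₂` the
second ellipse lies strictly inside the first, so there is no solution, and when `B₂ < B₁` and
`A₁ < A₂` Cramer's rule gives `x² = DE`, `y² = E`.
-/

section

variable {A₁ B₁ A₂ B₂ x y : ℝ}

lemma eq_one_div_sqrt_iff {b : ℝ} (hb : 0 < b) (hx : 0 < x) : x = 1 / √b ↔ b * x ^ 2 = 1 := by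
  rw [one_div, ← Real.sqrt_inv, eq_comm, Real.sqrt_eq_iff_eq_sq (by positivity) hx.le,
    mul_eq_one_iff_inv_eq₀ hb.ne']

lemma eq_sqrt_iff_sq_eq {a : ℝ} (ha : 0 ≤ a) (hx : 0 ≤ x) : x = √a ↔ x ^ 2 = a := by
  rw [eq_comm, Real.sqrt_eq_iff_eq_sq ha hx, eq_comm]

lemma fixedPoint_iff (hx : x ≠ 0) :
    (B₂ * x ^ 3 + A₂ * x * y ^ 2 = x ∧ B₁ * x ^ 2 * y + A₁ * y ^ 3 = y) ↔
      (y = 0 ∧ B₂ * x ^ 2 = 1) ∨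
        (y ≠ 0 ∧ B₂ * x ^ 2 + A₂ * y ^ 2 = 1 ∧ B₁ * x ^ 2 + A₁ * y ^ 2 = 1) := by
  have hfirst : B₂ * x ^ 3 + A₂ * x * y ^ 2 = x ↔ B₂ * x ^ 2 + A₂ * y ^ 2 = 1 :=
    (show _ ↔ x * (B₂ * x ^ 2 + A₂ * y ^ 2) = x * 1 from
      ⟨fun h => by linear_combination h, fun h => by linear_combination h⟩).trans
      (mul_right_inj' hx)
  have hsecond : B₁ * x ^ 2 * y + A₁ * y ^ 3 = y ↔ y = 0 ∨ B₁ * x ^ 2 + A₁ * y ^ 2 = 1 :=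
    (show _ ↔ y * (B₁ * x ^ 2 + A₁ * y ^ 2) = y * 1 from
      ⟨fun h => by linear_combination h, fun h => by linear_combination h⟩).trans
      (mul_eq_mul_left_iff.trans or_comm)
  rw [hfirst, hsecond]
  rcases eq_or_ne y 0 with rfl | hy
  · simp
  · simp [hy]

lemma add_mul_sq_lt_add_mul_sq (hB : B₁ ≤ B₂) (hA : A₁ < A₂) (hy : y ≠ 0) :
    B₁ * x ^ 2 + A₁ * y ^ 2 < B₂ * x ^ 2 + A₂ * y ^ 2 :=
  add_lt_add_of_le_of_lt (mul_le_mul_of_nonneg_right hB (sq_nonneg x))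
    (mul_lt_mul_of_pos_right hA (by positivity))

lemma linear_system_iff {D E X Y : ℝ} (hB : B₁ ≠ B₂) (hD : D * (B₁ - B₂) = A₂ - A₁)
    (hE : E * (A₂ + D * B₂) = 1) :
    (B₂ * X + A₂ * Y = 1 ∧ B₁ * X + A₁ * Y = 1) ↔ X = D * E ∧ Y = E := by
  constructor
  · rintro ⟨h₂, h₁⟩
    have hX : X = D * Y :=
      mul_left_cancel₀ (sub_ne_zero.mpr hB) (by linear_combination h₁ - h₂ - Y * hD)
    have hY : Y = E := by linear_combination E * h₂ - Y * hE - E * B₂ * hX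
    exact ⟨hY ▸ hX, hY⟩
  · rintro ⟨hX, hY⟩
    constructor
    · linear_combination B₂ * hX + A₂ * hY + hE
    · linear_combination B₁ * hX + A₁ * hY + hE + E * hD
end

theorem stmt_14_general (A₁ B₁ A₂ B₂ : ℝ)
    (hA₂ : 0 < A₂) (hB₂ : 0 < B₂) :
    (B₁ ≤ B₂ → A₁ < A₂ →
      ∀ x y : ℝ, 0 ≤ y → y < x →
        ((B₂ * x ^ 3 + A₂ * x * y ^ 2 = x ∧ B₁ * x ^ 2 * y + A₁ * y ^ 3 = y) ↔
          (x = 1 / Real.sqrt B₂ ∧ y = 0))) ∧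
    (B₂ < B₁ → A₁ < A₂ → 1 < (A₂ - A₁) / (B₁ - B₂) →
      ∀ x y : ℝ, 0 ≤ y → y < x →
        ((B₂ * x ^ 3 + A₂ * x * y ^ 2 = x ∧ B₁ * x ^ 2 * y + A₁ * y ^ 3 = y) ↔
          ((x = 1 / Real.sqrt B₂ ∧ y = 0) ∨
           (x = Real.sqrt (((A₂ - A₁) / (B₁ - B₂)) *
                  (1 / (A₂ + ((A₂ - A₁) / (B₁ - B₂)) * B₂))) ∧
            y = Real.sqrt (1 / (A₂ + ((A₂ - A₁) / (B₁ - B₂)) * B₂)))))) := by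
  constructor
  · intro hB hA x y _ hyx
    have hx : 0 < x := by linarith
    rw [fixedPoint_iff hx.ne', and_comm, eq_one_div_sqrt_iff hB₂ hx,
      or_iff_left fun ⟨hy, h₂, h₁⟩ => (add_mul_sq_lt_add_mul_sq hB hA hy).ne (h₁.trans h₂.symm)]
  · intro hB hA _ x y hy hyx
    have hx : 0 < x := by linarith
    set D := (A₂ - A₁) / (B₁ - B₂)
    set E := 1 / (A₂ + D * B₂)
    have hD : D * (B₁ - B₂) = A₂ - A₁ := div_mul_cancel₀ _ (sub_pos.mpr hB).ne'
    have hD_pos : 0 < D := div_pos (sub_pos.mpr hA) (sub_pos.mpr hB)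
    have hE_pos : 0 < E := one_div_pos.mpr (by positivity)
    have hE : E * (A₂ + D * B₂) = 1 := one_div_mul_cancel (by positivity)
    rw [fixedPoint_iff hx.ne', linear_system_iff hB.ne' hD hE, and_comm (a := y = 0),
      eq_one_div_sqrt_iff hB₂ hx, eq_sqrt_iff_sq_eq (by positivity) hx.le,
      eq_sqrt_iff_sq_eq hE_pos.le hy]
    exact or_congr_right <| and_iff_right_of_imp fun ⟨_, hY⟩ hy0 =>
      hE_pos.ne' (by simp [← hY, hy0])

theorem stmt_14 (A₁ B₁ A₂ B₂ : ℝ)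
    (hA₁ : 0 < A₁) (hB₁ : 0 < B₁) (hA₂ : 0 < A₂) (hB₂ : 0 < B₂) :
    (B₁ ≤ B₂ → A₁ < A₂ →
      ∀ x y : ℝ, 0 ≤ y → y < x →
        ((B₂ * x ^ 3 + A₂ * x * y ^ 2 = x ∧ B₁ * x ^ 2 * y + A₁ * y ^ 3 = y) ↔
          (x = 1 / Real.sqrt B₂ ∧ y = 0))) ∧
    (B₂ < B₁ → A₁ < A₂ → 1 < (A₂ - A₁) / (B₁ - B₂) →
      ∀ x y : ℝ, 0 ≤ y → y < x →
        ((B₂ * x ^ 3 + A₂ * x * y ^ 2 = x ∧ B₁ * x ^ 2 * y + A₁ * y ^ 3 = y) ↔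
          ((x = 1 / Real.sqrt B₂ ∧ y = 0) ∨
           (x = Real.sqrt (((A₂ - A₁) / (B₁ - B₂)) *
                  (1 / (A₂ + ((A₂ - A₁) / (B₁ - B₂)) * B₂))) ∧
            y = Real.sqrt (1 / (A₂ + ((A₂ - A₁) / (B₁ - B₂)) * B₂)))))) :=
  stmt_14_general A₁ B₁ A₂ B₂ hA₂ hB₂
end
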